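/- The map pr is a projection onto the space of sectional curvature tensors: for every quadrilinear map S : T×T×T×T → ℝ that is symmetric in its first pair and in its second pair of arguments (S(X,Y;U,V) = S(Y,X;U,V) = S(X,Y;V,U)), the quadrilinear map pr S is a sectional curvature tensor, and pr S = S whenever S is itself a sectional curvature tensor. -/

import Mathlib

/-!
Linearity and the two pair symmetries of `pr S` are inherited term by term from `S`, and
`(pr S)(X,X;X,V) = 0` holds identically. Conversely, for a sectional curvature tensor `S`,
polarizing the cubic form `X ↦ S(X,X;X,V)` gives the first Bianchi identity in the first three
slots; the four Bianchi identities on `{X,Y,U,V}` then force `S(X,Y;U,V) = S(U,V;X,Y)`, and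
with these the defining formula of `pr S` collapses to `S`.
-/

open scoped BigOperators

variable {T : Type*} [NormedAddCommGroup T] [InnerProductSpace ℝ T] [FiniteDimensional ℝ T]

/-- A map `T → T → T → T → ℝ` that is linear in each of its four arguments. -/
def IsQuadrilinear (R : T → T → T → T → ℝ) : Prop :=
  (∀ Y U V, IsLinearMap ℝ fun X => R X Y U V) ∧
  (∀ X U V, IsLinearMap ℝ fun Y => R X Y U V) ∧
  (∀ X Y V, IsLinearMap ℝ fun U => R X Y U V) ∧
  (∀ X Y U, IsLinearMap ℝ fun V => R X Y U V)

/-- An algebraic curvature tensor on `T`. -/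
def IsAlgCurv (R : T → T → T → T → ℝ) : Prop :=
  IsQuadrilinear R ∧
  (∀ X Y U V : T, R X Y U V = -R Y X U V) ∧
  (∀ X Y U V : T, R X Y U V = -R X Y V U) ∧
  (∀ X Y Z V : T, R X Y Z V + R Y Z X V + R Z X Y V = 0)

/-- A sectional curvature tensor on `T`. -/
def IsSecCurv (S : T → T → T → T → ℝ) : Prop :=
  IsQuadrilinear S ∧
  (∀ X Y U V : T, S X Y U V = S Y X U V) ∧
  (∀ X Y U V : T, S X Y U V = S X Y V U) ∧
  (∀ X V : T, S X X X V = 0)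

/-- The projection `pr` onto sectional curvature tensors, defined by
`6·(pr S)(X,Y;U,V) := 2·S(X,Y;U,V) + 2·S(U,V;X,Y) − S(X,U;Y,V) − S(X,V;Y,U)
  − S(Y,U;X,V) − S(Y,V;X,U)`. -/
noncomputable def prQ (S : T → T → T → T → ℝ) : T → T → T → T → ℝ :=
  fun X Y U V =>
    (1 / 6 : ℝ) * (2 * S X Y U V + 2 * S U V X Y - S X U Y V - S X V Y U
      - S Y U X V - S Y V X U)

section

omit [FiniteDimensional ℝ T]

namespace IsQuadrilinear

variable {R : T → T → T → T → ℝ} (hR : IsQuadrilinear R)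
include hR

theorem map_add₁ (X X' Y U V : T) : R (X + X') Y U V = R X Y U V + R X' Y U V :=
  (hR.1 Y U V).map_add X X'

theorem map_add₂ (X Y Y' U V : T) : R X (Y + Y') U V = R X Y U V + R X Y' U V :=
  (hR.2.1 X U V).map_add Y Y'

theorem map_add₃ (X Y U U' V : T) : R X Y (U + U') V = R X Y U V + R X Y U' V :=
  (hR.2.2.1 X Y V).map_add U U'

theorem map_add₄ (X Y U V V' : T) : R X Y U (V + V') = R X Y U V + R X Y U V' :=
  (hR.2.2.2 X Y U).map_add V V'

theorem map_smul₁ (c : ℝ) (X Y U V : T) : R (c • X) Y U V = c * R X Y U V :=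
  (hR.1 Y U V).map_smul c X

theorem map_smul₂ (c : ℝ) (X Y U V : T) : R X (c • Y) U V = c * R X Y U V :=
  (hR.2.1 X U V).map_smul c Y

theorem map_smul₃ (c : ℝ) (X Y U V : T) : R X Y (c • U) V = c * R X Y U V :=
  (hR.2.2.1 X Y V).map_smul c U

theorem map_smul₄ (c : ℝ) (X Y U V : T) : R X Y U (c • V) = c * R X Y U V :=
  (hR.2.2.2 X Y U).map_smul c V

theorem prQ : IsQuadrilinear (prQ R) := by
  refine ⟨fun Y U V => ⟨fun X X' => ?_, fun c X => ?_⟩, fun X U V => ⟨fun Y Y' => ?_, fun c Y => ?_⟩,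
    fun X Y V => ⟨fun U U' => ?_, fun c U => ?_⟩, fun X Y U => ⟨fun V V' => ?_, fun c V => ?_⟩⟩ <;>
  simp only [_root_.prQ, hR.map_add₁, hR.map_add₂, hR.map_add₃, hR.map_add₄, hR.map_smul₁,
    hR.map_smul₂, hR.map_smul₃, hR.map_smul₄, smul_eq_mul] <;>
  ring

end IsQuadrilinear

theorem isSecCurv_prQ {S : T → T → T → T → ℝ} (hquad : IsQuadrilinear S)
    (hsym1 : ∀ X Y U V : T, S X Y U V = S Y X U V)
    (hsym2 : ∀ X Y U V : T, S X Y U V = S X Y V U) : IsSecCurv (prQ S) := by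
  refine ⟨hquad.prQ, fun X Y U V => ?_, fun X Y U V => ?_, fun X V => ?_⟩
  · simp only [prQ]
    rw [hsym1 X Y U V, hsym2 U V X Y]
    ring
  · simp only [prQ]
    rw [hsym2 X Y U V, hsym1 U V X Y]
    ring
  · simp only [prQ]
    ring

namespace IsSecCurv

variable {S : T → T → T → T → ℝ} (hS : IsSecCurv S)
include hS

theorem cyclic_sum_eq_zero (X Y Z V : T) : S X Y Z V + S Y Z X V + S Z X Y V = 0 := by
  obtain ⟨hquad, hsym1, -, hzero⟩ := hS
  -- inclusion–exclusion over `X + Y + Z` isolates the terms of the cubic form that are mixed in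
  -- all three variables, which sum to twice the cyclic sum
  have hXY := hzero (X + Y) V
  have hXZ := hzero (X + Z) V
  have hYZ := hzero (Y + Z) V
  have hXYZ := hzero (X + Y + Z) V
  simp only [hquad.map_add₁, hquad.map_add₂, hquad.map_add₃] at hXY hXZ hYZ hXYZ
  linarith [hzero X V, hzero Y V, hzero Z V, hsym1 Y X Z V, hsym1 Z Y X V, hsym1 Z X Y V,
    hsym1 Y X X V, hsym1 Z X X V, hsym1 X Y Y V, hsym1 Z Y Y V, hsym1 X Z Z V, hsym1 Y Z Z V]

theorem pair_comm (X Y U V : T) : S X Y U V = S U V X Y := by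
  have bianchi := hS.cyclic_sum_eq_zero
  obtain ⟨-, hsym1, hsym2, -⟩ := hS
  -- the Bianchi identities with last slot `V`, `U` minus those with last slot `X`, `Y`
  linarith [bianchi X Y U V, bianchi X Y V U, bianchi U V X Y, bianchi U V Y X,
    hsym1 U X Y V, hsym2 X Y U V, hsym1 V X Y U, hsym1 V X U Y, hsym2 X V Y U, hsym2 X U Y V,
    hsym2 U V X Y, hsym1 V Y U X, hsym2 Y V X U, hsym2 Y U X V]

theorem prQ_eq : prQ S = S := by
  have bianchi := hS.cyclic_sum_eq_zero
  have pair_comm := hS.pair_comm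
  obtain ⟨-, hsym1, hsym2, -⟩ := hS
  funext X Y U V
  simp only [prQ]
  linarith [pair_comm X Y U V, bianchi X Y U V, bianchi X Y V U,
    hsym1 U X Y V, hsym2 X Y U V, hsym1 V X Y U]

end IsSecCurv

end

/-- `pr` is a projection onto the space of sectional curvature tensors. -/
theorem prQ_projection (S : T → T → T → T → ℝ) (hquad : IsQuadrilinear S)
    (hsym1 : ∀ X Y U V : T, S X Y U V = S Y X U V)
    (hsym2 : ∀ X Y U V : T, S X Y U V = S X Y V U) :
    IsSecCurv (prQ S) ∧ (IsSecCurv S → prQ S = S) :=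
  ⟨isSecCurv_prQ hquad hsym1 hsym2, fun hS => hS.prQ_eq⟩
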